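/- arXiv:1403.0215 — 2 statements merged into one kernel-verified Lean document; each statement's English description precedes it below -/
import Mathlib

section
/- Let N ≥ 1, let Ω ⊆ ℝ^N be an open set, and let p > 1 be real. Let h : Ω → ℝ^N be a C^1 vector field with div h(x) > 0 for every x ∈ Ω. Then for every C^1 function u : ℝ^N → ℝ whose support is compact and contained in Ω and such that ∫_Ω (|h(x)|^p/(div h(x))^{p−1}) |∇u(x)|^p dx < ∞, one has ∫_Ω |u(x)|^p div h(x) dx ≤ p^p ∫_Ω (|h(x)|^p/(div h(x))^{p−1}) |∇u(x)|^p dx. -/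
/-!
Put `v = |u|^p`, a `C¹` function because `p > 1`. The divergence theorem for the compactly
supported field `v h` gives `∫ v div h = -∫ ∇v · h ≤ p ∫ |u|^(p-1) |h| |∇u|`. Hölder's inequality
with exponents `p/(p-1)` and `p`, after distributing the weight `div h` between the two factors,
bounds this by `p (∫ |u|^p div h)^((p-1)/p) (∫ |h|^p (div h)^(1-p) |∇u|^p)^(1/p)`. The left side
is finite, so dividing by its `(p-1)/p`-th power and raising to the power `p` gives the claim.
-/

open MeasureTheory Finset

noncomputable section

/-- The Euclidean divergence `div h = ∑_j ∂h_j/∂x_j`. -/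
def divF (n : ℕ) (h : EuclideanSpace ℝ (Fin n) → EuclideanSpace ℝ (Fin n))
    (x : EuclideanSpace ℝ (Fin n)) : ℝ :=
  ∑ j : Fin n, fderiv ℝ h x (EuclideanSpace.single j 1) j

theorem ContinuousOn.integrableOn_of_forall_sdiff_eq_zero {X G : Type*} [TopologicalSpace X]
    [T2Space X] [MeasurableSpace X] [OpensMeasurableSpace X] [NormedAddCommGroup G]
    {μ : Measure X} [IsLocallyFiniteMeasure μ] {f : X → G} {K Ω : Set X}
    (hf : ContinuousOn f Ω) (hK : IsCompact K) (hKΩ : K ⊆ Ω) (hΩ : MeasurableSet Ω)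
    (h0 : ∀ x ∈ Ω \ K, f x = 0) : IntegrableOn f Ω μ :=
  ((hf.mono hKΩ).integrableOn_compact hK).of_forall_sdiff_eq_zero hΩ h0

section General

variable {E F : Type*} [NormedAddCommGroup E] [NormedSpace ℝ E]
  [NormedAddCommGroup F] [NormedSpace ℝ F]

theorem ContDiff.smul_of_tsupport_subset {k : WithTop ℕ∞} {Ω : Set E} (hΩ : IsOpen Ω)
    {f : E → ℝ} {g : E → F} (hf : ContDiff ℝ k f) (hg : ContDiffOn ℝ k g Ω)
    (hsupp : tsupport f ⊆ Ω) : ContDiff ℝ k (fun x ↦ f x • g x) := by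
  refine contDiff_iff_contDiffAt.2 fun x ↦ ?_
  by_cases hx : x ∈ Ω
  · exact hf.contDiffAt.smul (hg.contDiffAt (hΩ.mem_nhds hx))
  · have hf0 : f =ᶠ[nhds x] 0 := notMem_tsupport_iff_eventuallyEq.1 (fun h ↦ hx (hsupp h))
    refine contDiffAt_const (c := (0 : F)).congr_of_eventuallyEq ?_
    filter_upwards [hf0] with y hy
    simp [hy]

theorem integral_fderiv_apply_eq_zero [FiniteDimensional ℝ E] [MeasurableSpace E] [BorelSpace E]
    {μ : Measure E} [μ.IsAddHaarMeasure] {f : E → F} (hf : ContDiff ℝ 1 f)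
    (hcs : HasCompactSupport f) (v : E) : ∫ x, fderiv ℝ f x v ∂μ = 0 := by
  have hf' : Continuous (fun x ↦ fderiv ℝ f x v) :=
    (hf.continuous_fderiv one_ne_zero).clm_apply continuous_const
  -- integration by parts against the constant function `1`
  have := integral_bilinear_fderiv_right_eq_neg_left_of_integrable (μ := μ) (v := v)
    (g := fun _ ↦ (1 : ℝ)) (B := (ContinuousLinearMap.lsmul ℝ ℝ).flip)
    (by simpa using hf'.integrable_of_hasCompactSupport (hcs.fderiv_apply ℝ v))
    (by simp) (by simpa using hf.continuous.integrable_of_hasCompactSupport hcs)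
    (fun x _ ↦ hf.differentiable one_ne_zero x) (fun x _ ↦ differentiableAt_const _)
  simpa using this.symm

end General

theorem lintegral_rpow_sub_one_mul_le {α : Type*} [MeasurableSpace α] {μ : Measure α} {p : ℝ}
    (hp : 1 < p) {a b d : α → ℝ} (ha : AEMeasurable a μ) (hb : AEMeasurable b μ)
    (hd : AEMeasurable d μ) (ha0 : ∀ᵐ x ∂μ, 0 ≤ a x) (hb0 : ∀ᵐ x ∂μ, 0 ≤ b x)
    (hd0 : ∀ᵐ x ∂μ, 0 < d x) :
    ∫⁻ x, ENNReal.ofReal (a x ^ (p - 1) * b x) ∂μ ≤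
      (∫⁻ x, ENNReal.ofReal (a x ^ p * d x) ∂μ) ^ ((p - 1) / p) *
        (∫⁻ x, ENNReal.ofReal (b x ^ p / d x ^ (p - 1)) ∂μ) ^ (1 / p) := by
  have hp0 : 0 < p := by linarith
  set F := fun x ↦ ENNReal.ofReal (a x ^ (p - 1) * d x ^ ((p - 1) / p))
  set G := fun x ↦ ENNReal.ofReal (b x / d x ^ ((p - 1) / p))
  have hpq : (p / (p - 1)).HolderConjugate p := (Real.HolderConjugate.conjExponent hp).symm
  have hFG : ∀ᵐ x ∂μ, ENNReal.ofReal (a x ^ (p - 1) * b x) = (F * G) x := by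
    filter_upwards [ha0, hd0] with x hax hdx
    rw [Pi.mul_apply, ← ENNReal.ofReal_mul (by positivity)]
    congr 1
    field_simp [(Real.rpow_pos_of_pos hdx ((p - 1) / p)).ne']
  have hF : ∀ᵐ x ∂μ, F x ^ (p / (p - 1)) = ENNReal.ofReal (a x ^ p * d x) := by
    filter_upwards [ha0, hd0] with x hax hdx
    have hp1 : p - 1 ≠ 0 := by linarith
    have hexp : (p - 1) / p * (p / (p - 1)) = 1 := by field_simp
    rw [ENNReal.ofReal_rpow_of_nonneg (by positivity) hpq.nonneg,
      Real.mul_rpow (by positivity) (by positivity), ← Real.rpow_mul hax, ← Real.rpow_mul hdx.le,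
      mul_div_cancel₀ _ hp1, hexp, Real.rpow_one]
  have hG : ∀ᵐ x ∂μ, G x ^ p = ENNReal.ofReal (b x ^ p / d x ^ (p - 1)) := by
    filter_upwards [hb0, hd0] with x hbx hdx
    rw [ENNReal.ofReal_rpow_of_nonneg (by positivity) hp0.le,
      Real.div_rpow hbx (by positivity), ← Real.rpow_mul hdx.le]
    congr 3
    field_simp
  calc ∫⁻ x, ENNReal.ofReal (a x ^ (p - 1) * b x) ∂μ
      = ∫⁻ x, (F * G) x ∂μ := lintegral_congr_ae hFG
    _ ≤ (∫⁻ x, F x ^ (p / (p - 1)) ∂μ) ^ (1 / (p / (p - 1))) *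
          (∫⁻ x, G x ^ p ∂μ) ^ (1 / p) :=
        ENNReal.lintegral_mul_le_Lp_mul_Lq μ hpq
          ((ha.pow_const _).mul (hd.pow_const _)).ennreal_ofReal
          (hb.div (hd.pow_const _)).ennreal_ofReal
    _ = _ := by rw [lintegral_congr_ae hF, lintegral_congr_ae hG, one_div_div]

theorem ENNReal.le_rpow_mul_of_le_mul_rpow_mul_rpow {a b c : ENNReal} {p : ℝ} (hp : 0 < p)
    (ha : a ≠ ⊤) (h : a ≤ c * (a ^ ((p - 1) / p) * b ^ (1 / p))) : a ≤ c ^ p * b := by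
  rcases eq_or_ne a 0 with rfl | ha0
  · simp
  have hsplit : a ^ ((p - 1) / p) * a ^ (1 / p) = a := by
    rw [← ENNReal.rpow_add _ _ ha0 ha, ← add_div, sub_add_cancel, div_self hp.ne', ENNReal.rpow_one]
  have hroot : a ^ (1 / p) ≤ c * b ^ (1 / p) := by
    rw [← ENNReal.mul_le_mul_iff_right (a := a ^ ((p - 1) / p)) (by simp [ha0, ha])
      (by simp [ha0, ha])]
    calc a ^ ((p - 1) / p) * a ^ (1 / p) = a := hsplit
      _ ≤ c * (a ^ ((p - 1) / p) * b ^ (1 / p)) := h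
      _ = a ^ ((p - 1) / p) * (c * b ^ (1 / p)) := by ring
  calc a = (a ^ (1 / p)) ^ p := by
        rw [← ENNReal.rpow_mul, one_div_mul_cancel hp.ne', ENNReal.rpow_one]
    _ ≤ (c * b ^ (1 / p)) ^ p := ENNReal.rpow_le_rpow hroot hp.le
    _ = c ^ p * b := by
        rw [ENNReal.mul_rpow_of_nonneg _ _ hp.le, ← ENNReal.rpow_mul, one_div_mul_cancel hp.ne',
          ENNReal.rpow_one]

section Divergence

variable {n : ℕ} {Ω : Set (EuclideanSpace ℝ (Fin n))}
  {h : EuclideanSpace ℝ (Fin n) → EuclideanSpace ℝ (Fin n)} {u : EuclideanSpace ℝ (Fin n) → ℝ}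
  {p : ℝ}

theorem integral_divF_eq_zero {w : EuclideanSpace ℝ (Fin n) → EuclideanSpace ℝ (Fin n)}
    (hw : ContDiff ℝ 1 w) (hcs : HasCompactSupport w) : ∫ x, divF n w x = 0 := by
  have hint : ∀ v, Integrable (fun x ↦ fderiv ℝ w x v) :=
    fun v ↦ ((hw.continuous_fderiv one_ne_zero).clm_apply continuous_const)
      |>.integrable_of_hasCompactSupport (hcs.fderiv_apply ℝ v)
  have hint_j : ∀ j : Fin n, Integrable (fun x ↦ fderiv ℝ w x (EuclideanSpace.single j 1) j) :=
    fun j ↦ (EuclideanSpace.proj (𝕜 := ℝ) j).integrable_comp (hint _)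
  have hzero : ∀ j : Fin n, ∫ x, fderiv ℝ w x (EuclideanSpace.single j 1) j = 0 := fun j ↦ by
    simpa [integral_fderiv_apply_eq_zero hw hcs] using
      (EuclideanSpace.proj (𝕜 := ℝ) j).integral_comp_comm (hint (EuclideanSpace.single j 1))
  simp only [divF, integral_finsetSum _ fun j _ ↦ hint_j j, hzero, Finset.sum_const_zero]

theorem divF_smul {f : EuclideanSpace ℝ (Fin n) → ℝ} {x : EuclideanSpace ℝ (Fin n)}
    (hf : DifferentiableAt ℝ f x) (hh : DifferentiableAt ℝ h x) :
    divF n (fun y ↦ f y • h y) x = f x * divF n h x + fderiv ℝ f x (h x) := by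
  have hsum : ∑ j : Fin n, fderiv ℝ f x (EuclideanSpace.single j 1) * h x j =
      fderiv ℝ f x (h x) := by
    conv_rhs => rw [← (EuclideanSpace.basisFun (Fin n) ℝ).sum_repr (h x)]
    simp [map_sum, mul_comm]
  simp [divF, fderiv_fun_smul hf hh, Finset.sum_add_distrib, Finset.mul_sum, hsum]

theorem ContDiffOn.continuousOn_divF (hh : ContDiffOn ℝ 1 h Ω) (hΩ : IsOpen Ω) :
    ContinuousOn (divF n h) Ω := by
  have hDh := hh.continuousOn_fderiv_of_isOpen hΩ le_rfl
  exact continuousOn_finsetSum _ fun j _ ↦ (EuclideanSpace.proj (𝕜 := ℝ) j).continuous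
    |>.comp_continuousOn (hDh.clm_apply continuousOn_const)

theorem setIntegral_mul_divF_eq_neg (hΩ : IsOpen Ω) (hh : ContDiffOn ℝ 1 h Ω)
    {v : EuclideanSpace ℝ (Fin n) → ℝ} (hv : ContDiff ℝ 1 v) (hcs : HasCompactSupport v)
    (hsupp : tsupport v ⊆ Ω) :
    ∫ x in Ω, v x * divF n h x = -∫ x in Ω, fderiv ℝ v x (h x) := by
  set w := fun x ↦ v x • h x
  have hw : ContDiff ℝ 1 w := hv.smul_of_tsupport_subset hΩ hh hsupp
  have hdiv_w : ∀ x ∈ Ω, divF n w x = v x * divF n h x + fderiv ℝ v x (h x) := fun x hx ↦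
    divF_smul (hv.differentiable one_ne_zero x)
      ((hh.contDiffAt (hΩ.mem_nhds hx)).differentiableAt one_ne_zero)
  have hdiv_w_int : ∫ x in Ω, divF n w x = 0 := by
    rw [setIntegral_eq_integral_of_forall_compl_eq_zero fun x hx ↦ ?_]
    · exact integral_divF_eq_zero hw hcs.smul_right
    have hxw : x ∉ tsupport w := fun hxw ↦ hx (hsupp (tsupport_smul_subset_left _ _ hxw))
    simp [divF, fderiv_of_notMem_tsupport ℝ hxw]
  have hint₁ : IntegrableOn (fun x ↦ v x * divF n h x) Ω :=
    (hv.continuous.continuousOn.mul (hh.continuousOn_divF hΩ))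
      |>.integrableOn_of_forall_sdiff_eq_zero hcs hsupp hΩ.measurableSet
        fun x hx ↦ by simp [image_eq_zero_of_notMem_tsupport hx.2]
  have hint₂ : IntegrableOn (fun x ↦ fderiv ℝ v x (h x)) Ω :=
    ((hv.continuous_fderiv one_ne_zero).continuousOn.clm_apply hh.continuousOn)
      |>.integrableOn_of_forall_sdiff_eq_zero hcs hsupp hΩ.measurableSet
        fun x hx ↦ by simp [fderiv_of_notMem_tsupport ℝ hx.2]
  rw [setIntegral_congr_fun hΩ.measurableSet hdiv_w, integral_add hint₁ hint₂] at hdiv_w_int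
  linarith

theorem integrableOn_abs_rpow_mul_divF (hΩ : IsOpen Ω) (hp : 0 < p) (hh : ContDiffOn ℝ 1 h Ω)
    (hu : Continuous u) (hcs : HasCompactSupport u) (hsupp : tsupport u ⊆ Ω) :
    IntegrableOn (fun x ↦ |u x| ^ p * divF n h x) Ω :=
  ((hu.abs.rpow_const fun _ ↦ Or.inr hp.le).continuousOn.mul (hh.continuousOn_divF hΩ))
    |>.integrableOn_of_forall_sdiff_eq_zero hcs hsupp hΩ.measurableSet fun x hx ↦ by
      simp [image_eq_zero_of_notMem_tsupport hx.2, Real.zero_rpow hp.ne']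

theorem lintegral_abs_rpow_mul_divF_le (hΩ : IsOpen Ω) (hp : 1 < p) (hh : ContDiffOn ℝ 1 h Ω)
    (hdiv : ∀ x ∈ Ω, 0 ≤ divF n h x) (hu : ContDiff ℝ 1 u) (hcs : HasCompactSupport u)
    (hsupp : tsupport u ⊆ Ω) :
    ∫⁻ x in Ω, ENNReal.ofReal (|u x| ^ p * divF n h x) ≤
      ENNReal.ofReal p *
        ∫⁻ x in Ω, ENNReal.ofReal (|u x| ^ (p - 1) * (‖h x‖ * ‖fderiv ℝ u x‖)) := by
  have hp0 : 0 < p := by linarith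
  set v := fun x ↦ |u x| ^ p
  have hv : ContDiff ℝ 1 v := by simpa using hu.norm_rpow hp
  have hv_zero : (fun t : ℝ ↦ |t| ^ p) 0 = 0 := by simp [Real.zero_rpow hp0.ne']
  have hDv : ∀ x,
      ‖fderiv ℝ v x (h x)‖ ≤ p * (|u x| ^ (p - 1) * (‖h x‖ * ‖fderiv ℝ u x‖)) := by
    intro x
    have := norm_fderiv_norm_rpow_le (hu.differentiable one_ne_zero) (x := x) hp
    simp only [Real.norm_eq_abs] at this
    calc ‖fderiv ℝ v x (h x)‖ ≤ ‖fderiv ℝ v x‖ * ‖h x‖ := (fderiv ℝ v x).le_opNorm _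
      _ ≤ p * |u x| ^ (p - 1) * ‖fderiv ℝ u x‖ * ‖h x‖ := by gcongr
      _ = _ := by ring
  have hIBP := setIntegral_mul_divF_eq_neg hΩ hh hv
    (hcs.comp_left (g := fun t ↦ |t| ^ p) hv_zero)
    ((tsupport_comp_subset (g := fun t ↦ |t| ^ p) hv_zero u).trans hsupp)
  calc ∫⁻ x in Ω, ENNReal.ofReal (v x * divF n h x)
      = ENNReal.ofReal (∫ x in Ω, v x * divF n h x) :=
        (ofReal_integral_eq_lintegral_ofReal
          (integrableOn_abs_rpow_mul_divF hΩ hp0 hh hu.continuous hcs hsupp)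
          (ae_restrict_of_forall_mem hΩ.measurableSet fun x hx ↦
            mul_nonneg (by positivity) (hdiv x hx))).symm
    _ ≤ ‖∫ x in Ω, fderiv ℝ v x (h x)‖ₑ := by
        rw [hIBP, ← ofReal_norm, Real.norm_eq_abs]
        exact ENNReal.ofReal_le_ofReal (neg_le_abs _)
    _ ≤ ∫⁻ x in Ω, ‖fderiv ℝ v x (h x)‖ₑ := enorm_integral_le_lintegral_enorm _
    _ ≤ ∫⁻ x in Ω, ENNReal.ofReal (p * (|u x| ^ (p - 1) * (‖h x‖ * ‖fderiv ℝ u x‖))) :=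
        lintegral_mono fun x ↦ by
          rw [← ofReal_norm]
          exact ENNReal.ofReal_le_ofReal (hDv x)
    _ = _ := by
        simp only [ENNReal.ofReal_mul hp0.le]
        exact lintegral_const_mul' _ _ ENNReal.ofReal_ne_top

end Divergence

theorem hardy_lemma_euclidean_general (n : ℕ)
    (Ω : Set (EuclideanSpace ℝ (Fin n))) (hΩ : IsOpen Ω)
    (p : ℝ) (hp : 1 < p)
    (h : EuclideanSpace ℝ (Fin n) → EuclideanSpace ℝ (Fin n))
    (hh : ContDiffOn ℝ 1 h Ω)
    (hdiv : ∀ x ∈ Ω, 0 < divF n h x)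
    (u : EuclideanSpace ℝ (Fin n) → ℝ) (hu : ContDiff ℝ 1 u)
    (hcs : HasCompactSupport u) (hsupp : tsupport u ⊆ Ω) :
    ∫⁻ x in Ω, ENNReal.ofReal (|u x| ^ p * divF n h x) ≤
      ENNReal.ofReal (p ^ p) *
        ∫⁻ x in Ω,
          ENNReal.ofReal (‖h x‖ ^ p / (divF n h x) ^ (p - 1) * ‖gradient u x‖ ^ p) := by
  have hp0 : 0 < p := by linarith
  have hΩm := hΩ.measurableSet
  have hfinite : ∫⁻ x in Ω, ENNReal.ofReal (|u x| ^ p * divF n h x) ≠ ⊤ :=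
    (integrableOn_abs_rpow_mul_divF hΩ hp0 hh hu.continuous hcs hsupp).lintegral_lt_top.ne
  have hholder := lintegral_rpow_sub_one_mul_le (μ := volume.restrict Ω) hp
    (a := fun x ↦ |u x|) (b := fun x ↦ ‖h x‖ * ‖fderiv ℝ u x‖) (d := divF n h)
    hu.continuous.abs.aemeasurable
    ((hh.continuousOn.norm.mul (hu.continuous_fderiv one_ne_zero).norm.continuousOn).aemeasurable
      hΩm)
    ((hh.continuousOn_divF hΩ).aemeasurable hΩm)
    (ae_of_all _ fun _ ↦ abs_nonneg _) (ae_of_all _ fun _ ↦ by positivity)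
    (ae_restrict_of_forall_mem hΩm hdiv)
  have hweight : ∀ x, (‖h x‖ * ‖fderiv ℝ u x‖) ^ p / divF n h x ^ (p - 1) =
      ‖h x‖ ^ p / divF n h x ^ (p - 1) * ‖gradient u x‖ ^ p := fun x ↦ by
    rw [Real.mul_rpow (norm_nonneg _) (norm_nonneg _), gradient, LinearIsometryEquiv.norm_map]
    ring
  simp only [hweight] at hholder
  rw [← ENNReal.ofReal_rpow_of_pos hp0]
  exact ENNReal.le_rpow_mul_of_le_mul_rpow_mul_rpow hp0 hfinite
    ((lintegral_abs_rpow_mul_divF_le hΩ hp hh (fun x hx ↦ (hdiv x hx).le) hu hcs hsupp).trans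
      (by gcongr))

/-- Mitidieri-type lemma: if `div h > 0` on the open set `Ω`, then
`∫_Ω |u|^p div h ≤ p^p ∫_Ω (|h|^p/(div h)^{p-1}) |∇u|^p` for compactly supported `C¹`
functions `u` with support in `Ω` for which the right-hand side is finite. -/
theorem hardy_lemma_euclidean (n : ℕ) (hn : 1 ≤ n)
    (Ω : Set (EuclideanSpace ℝ (Fin n))) (hΩ : IsOpen Ω)
    (p : ℝ) (hp : 1 < p)
    (h : EuclideanSpace ℝ (Fin n) → EuclideanSpace ℝ (Fin n))
    (hh : ContDiffOn ℝ 1 h Ω)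
    (hdiv : ∀ x ∈ Ω, 0 < divF n h x)
    (u : EuclideanSpace ℝ (Fin n) → ℝ) (hu : ContDiff ℝ 1 u)
    (hcs : HasCompactSupport u) (hsupp : tsupport u ⊆ Ω)
    (hfin : ∫⁻ x in Ω,
        ENNReal.ofReal (‖h x‖ ^ p / (divF n h x) ^ (p - 1) * ‖gradient u x‖ ^ p) < ⊤) :
    ∫⁻ x in Ω, ENNReal.ofReal (|u x| ^ p * divF n h x) ≤
      ENNReal.ofReal (p ^ p) *
        ∫⁻ x in Ω,
          ENNReal.ofReal (‖h x‖ ^ p / (divF n h x) ^ (p - 1) * ‖gradient u x‖ ^ p) :=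
  hardy_lemma_euclidean_general n Ω hΩ p hp h hh hdiv u hu hcs hsupp

end
end

section
/- Define φ(x,y) = −((Q−2)/2) · ( |x|^{2α} / [[(x,y)]]_λ^{2(1+α)} ) · ( x , (1+α) y / |x|^{α} ) for (x,y) ∈ ℝ^{N_1}×ℝ^{N_2} with x ≠ 0. Then at every point (x,y) with x ≠ 0, one has |φ(x,y)|^2 + div_λ φ(x,y) = −((Q−2)/2)^2 · |x|^{2α} / [[(x,y)]]_λ^{2(1+α)}, where div_λ φ = div_x φ^{(1)} + |x|^α div_y φ^{(2)} and φ = (φ^{(1)}, φ^{(2)}) are the ℝ^{N_1}- and ℝ^{N_2}-components of φ. -/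
open MeasureTheory Finset

noncomputable section

/-- the homogeneous norm `[[(x,y)]]_λ = (|x|^{2(1+α)} + (1+α)²|y|²)^{1/(2(1+α))}` associated
to the Grushin operator. -/
def grushinNorm {n₁ n₂ : ℕ} (α : ℝ) (x : EuclideanSpace ℝ (Fin n₁))
    (y : EuclideanSpace ℝ (Fin n₂)) : ℝ :=
  (‖x‖ ^ (2 * (1 + α)) + (1 + α) ^ 2 * ‖y‖ ^ 2) ^ (1 / (2 * (1 + α)))

/-- the gradient in the `x`-variables. -/
def gradX {n₁ n₂ : ℕ}
    (u : EuclideanSpace ℝ (Fin n₁) × EuclideanSpace ℝ (Fin n₂) → ℝ)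
    (x : EuclideanSpace ℝ (Fin n₁)) (y : EuclideanSpace ℝ (Fin n₂)) :
    EuclideanSpace ℝ (Fin n₁) :=
  gradient (fun x' => u (x', y)) x

/-- the gradient in the `y`-variables. -/
def gradY {n₁ n₂ : ℕ}
    (u : EuclideanSpace ℝ (Fin n₁) × EuclideanSpace ℝ (Fin n₂) → ℝ)
    (x : EuclideanSpace ℝ (Fin n₁)) (y : EuclideanSpace ℝ (Fin n₂)) :
    EuclideanSpace ℝ (Fin n₂) :=
  gradient (fun y' => u (x, y')) y

/-- the norm of the Grushin gradient `∇_λ u = (∇_x u, |x|^α ∇_y u)`. -/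
def grushinGradNorm {n₁ n₂ : ℕ} (α : ℝ)
    (u : EuclideanSpace ℝ (Fin n₁) × EuclideanSpace ℝ (Fin n₂) → ℝ)
    (x : EuclideanSpace ℝ (Fin n₁)) (y : EuclideanSpace ℝ (Fin n₂)) : ℝ :=
  Real.sqrt (‖gradX u x y‖ ^ 2 + ‖x‖ ^ (2 * α) * ‖gradY u x y‖ ^ 2)

/-- the homogeneous dimension `Q = N₁ + (1+α)N₂`. -/
def QG (n₁ n₂ : ℕ) (α : ℝ) : ℝ := n₁ + (1 + α) * n₂

/-- the first (ℝ^{N₁}-) component of the vector field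
`φ(x,y) = -((Q-2)/2)(|x|^{2α}/[[(x,y)]]_λ^{2(1+α)})(x, (1+α)y/|x|^α)`. -/
def grushinPhi1 {n₁ n₂ : ℕ} (α : ℝ) (x : EuclideanSpace ℝ (Fin n₁))
    (y : EuclideanSpace ℝ (Fin n₂)) : EuclideanSpace ℝ (Fin n₁) :=
  (-((QG n₁ n₂ α - 2) / 2) * (‖x‖ ^ (2 * α) / grushinNorm α x y ^ (2 * (1 + α)))) • x

/-- the second (ℝ^{N₂}-) component of the vector field `φ`. -/
def grushinPhi2 {n₁ n₂ : ℕ} (α : ℝ) (x : EuclideanSpace ℝ (Fin n₁))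
    (y : EuclideanSpace ℝ (Fin n₂)) : EuclideanSpace ℝ (Fin n₂) :=
  (-((QG n₁ n₂ α - 2) / 2) * (‖x‖ ^ (2 * α) / grushinNorm α x y ^ (2 * (1 + α))) *
      ((1 + α) / ‖x‖ ^ α)) • y

/-! Write `φ = c W (x, (1+α) y / |x|^α)` with `c = -(Q-2)/2` and
`W = t^α / (t^{1+α} + (1+α)² s)`, where `t = |x|²`, `s = |y|²`. Then
`|φ|² = c² W² (t^{1+α} + (1+α)² s) / t^α = c² W`. A radial field `g(|z|²) z` on `ℝ^N` has
divergence `N g + 2 |z|² g'`, so `div_λ φ = c ((N₁ + (1+α) N₂) W + 2 (t ∂_t W + (1+α) s ∂_s W))`.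
Since `W` is homogeneous of degree `-1` for the dilations `(t, s) ↦ (r t, r^{1+α} s)`, Euler's
relation turns this into `c (Q - 2) W`, and `c² W + c (Q - 2) W = -c² W`. -/

theorem sum_fderiv_smul_apply_of_norm_sq {ι : Type*} [Fintype ι] [DecidableEq ι]
    {g : ℝ → ℝ} {g' : ℝ} (x : EuclideanSpace ℝ ι) (hg : HasDerivAt g g' (‖x‖ ^ 2)) :
    ∑ j, fderiv ℝ (fun x' => g (‖x'‖ ^ 2) • x') x (EuclideanSpace.single j 1) j
      = Fintype.card ι * g (‖x‖ ^ 2) + 2 * ‖x‖ ^ 2 * g' := by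
  have hF : HasFDerivAt (fun x' : EuclideanSpace ℝ ι => g (‖x'‖ ^ 2) • x') _ x :=
    (hg.comp_hasFDerivAt x (hasStrictFDerivAt_norm_sq x).hasFDerivAt).smul (hasFDerivAt_id x)
  rw [hF.fderiv, EuclideanSpace.real_norm_sq_eq x]
  simp [Finset.sum_add_distrib, Finset.mul_sum, Finset.sum_mul, EuclideanSpace.inner_single_right,
    EuclideanSpace.real_norm_sq_eq]
  exact Finset.sum_congr rfl fun _ _ => by ring

/-- `|x|^{2α} / [[(x,y)]]_λ^{2(1+α)}` in the variables `t = |x|²`, `s = |y|²`. -/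
def grushinWeight (α t s : ℝ) : ℝ := t ^ α / (t ^ (1 + α) + (1 + α) ^ 2 * s)

theorem grushinWeight_euler {α t s : ℝ} (ht : 0 < t) (hs : 0 ≤ s) :
    ∃ dt ds, HasDerivAt (grushinWeight α · s) dt t ∧ HasDerivAt (grushinWeight α t) ds s ∧
      t * dt + (1 + α) * s * ds = -grushinWeight α t s := by
  have hρ : 0 < t ^ (1 + α) + (1 + α) ^ 2 * s := by positivity
  have hnum := Real.hasDerivAt_rpow_const (p := α) (Or.inl ht.ne')
  have hden := (Real.hasDerivAt_rpow_const (p := 1 + α) (Or.inl ht.ne')).add_const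
    ((1 + α) ^ 2 * s)
  have hs' := ((hasDerivAt_id s).const_mul ((1 + α) ^ 2)).const_add (t ^ (1 + α))
  refine ⟨_, _, hnum.div hden hρ.ne', (hasDerivAt_const s (t ^ α)).div hs' hρ.ne', ?_⟩
  simp only [grushinWeight, add_sub_cancel_left, Real.rpow_sub_one ht.ne', Real.rpow_add ht,
    Real.rpow_one] at hρ ⊢
  field_simp
  ring

section

variable {n₁ n₂ : ℕ} {α : ℝ} (x : EuclideanSpace ℝ (Fin n₁)) (y : EuclideanSpace ℝ (Fin n₂))

theorem rpow_div_grushinNorm_rpow (hα : 1 + α ≠ 0) :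
    ‖x‖ ^ (2 * α) / grushinNorm α x y ^ (2 * (1 + α)) = grushinWeight α (‖x‖ ^ 2) (‖y‖ ^ 2) := by
  have h0 : 0 ≤ ‖x‖ ^ (2 * (1 + α)) + (1 + α) ^ 2 * ‖y‖ ^ 2 := by positivity
  rw [grushinNorm, ← Real.rpow_mul h0, one_div_mul_cancel (by simpa using hα), Real.rpow_one,
    grushinWeight, Real.rpow_mul (norm_nonneg x), Real.rpow_mul (norm_nonneg x), Real.rpow_two]

theorem grushinPhi1_eq (hα : 1 + α ≠ 0) :
    grushinPhi1 α x y =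
      (-((QG n₁ n₂ α - 2) / 2) * grushinWeight α (‖x‖ ^ 2) (‖y‖ ^ 2)) • x := by
  rw [grushinPhi1, rpow_div_grushinNorm_rpow x y hα]

theorem grushinPhi2_eq (hα : 1 + α ≠ 0) :
    grushinPhi2 α x y =
      (-((QG n₁ n₂ α - 2) / 2) * grushinWeight α (‖x‖ ^ 2) (‖y‖ ^ 2) *
        ((1 + α) / ‖x‖ ^ α)) • y := by
  rw [grushinPhi2, rpow_div_grushinNorm_rpow x y hα]

theorem norm_sq_grushinPhi (hα : 1 + α ≠ 0) (hx : x ≠ 0) :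
    ‖grushinPhi1 α x y‖ ^ 2 + ‖grushinPhi2 α x y‖ ^ 2 =
      ((QG n₁ n₂ α - 2) / 2) ^ 2 * grushinWeight α (‖x‖ ^ 2) (‖y‖ ^ 2) := by
  have ha : 0 < ‖x‖ ^ α := Real.rpow_pos_of_pos (norm_pos_iff.2 hx) α
  have hsq : (‖x‖ ^ 2) ^ α = (‖x‖ ^ α) ^ 2 := (Real.rpow_pow_comm (norm_nonneg x) α 2).symm
  have hρ : 0 < ‖x‖ ^ 2 * (‖x‖ ^ α) ^ 2 + (1 + α) ^ 2 * ‖y‖ ^ 2 := by positivity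
  rw [grushinPhi1_eq x y hα, grushinPhi2_eq x y hα, grushinWeight,
    Real.rpow_add (by positivity), Real.rpow_one, hsq]
  simp only [norm_smul, Real.norm_eq_abs, sq_abs, mul_pow]
  field_simp

theorem grushin_div_phi (hα : 1 + α ≠ 0) (hx : x ≠ 0) :
    (∑ j : Fin n₁, fderiv ℝ (fun x' => grushinPhi1 α x' y) x (EuclideanSpace.single j 1) j) +
        ‖x‖ ^ α *
          ∑ j : Fin n₂, fderiv ℝ (fun y' => grushinPhi2 α x y') y (EuclideanSpace.single j 1) j =
      -((QG n₁ n₂ α - 2) / 2) * (QG n₁ n₂ α - 2) * grushinWeight α (‖x‖ ^ 2) (‖y‖ ^ 2) := by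
  obtain ⟨dt, ds, hdt, hds, h_euler⟩ :=
    grushinWeight_euler (α := α) (pow_pos (norm_pos_iff.2 hx) 2) (sq_nonneg ‖y‖)
  have ha : ‖x‖ ^ α ≠ 0 := (Real.rpow_pos_of_pos (norm_pos_iff.2 hx) α).ne'
  set c := -((QG n₁ n₂ α - 2) / 2)
  simp_rw [grushinPhi1_eq _ y hα, grushinPhi2_eq x _ hα]
  rw [sum_fderiv_smul_apply_of_norm_sq x (hdt.const_mul c),
    sum_fderiv_smul_apply_of_norm_sq y ((hds.const_mul c).mul_const ((1 + α) / ‖x‖ ^ α))]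
  simp only [Fintype.card_fin, QG]
  field_simp
  linear_combination (2 * c) * h_euler

end

theorem grushin_phi_identity_general (n₁ n₂ : ℕ)
    (α : ℝ) (hα : 0 ≤ α)
    (x : EuclideanSpace ℝ (Fin n₁)) (y : EuclideanSpace ℝ (Fin n₂)) (hx : x ≠ 0) :
    ‖grushinPhi1 α x y‖ ^ 2 + ‖grushinPhi2 α x y‖ ^ 2 +
        ((∑ j : Fin n₁,
            fderiv ℝ (fun x' => grushinPhi1 α x' y) x (EuclideanSpace.single j 1) j) +
          ‖x‖ ^ α *
            ∑ j : Fin n₂,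
              fderiv ℝ (fun y' => grushinPhi2 α x y') y (EuclideanSpace.single j 1) j) =
      -(((QG n₁ n₂ α - 2) / 2) ^ 2) *
        (‖x‖ ^ (2 * α) / grushinNorm α x y ^ (2 * (1 + α))) := by
  have hα' : 1 + α ≠ 0 := by positivity
  rw [norm_sq_grushinPhi x y hα' hx, grushin_div_phi x y hα' hx,
    rpow_div_grushinNorm_rpow x y hα']
  ring

/-- the pointwise identity
`|φ|² + div_λ φ = -((Q-2)/2)² |x|^{2α}/[[(x,y)]]_λ^{2(1+α)}` at points with `x ≠ 0`,
where `div_λ φ = div_x φ^{(1)} + |x|^α div_y φ^{(2)}`. -/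
theorem grushin_phi_identity (n₁ n₂ : ℕ) (h₁ : 1 ≤ n₁) (h₂ : 1 ≤ n₂)
    (α : ℝ) (hα : 0 ≤ α)
    (x : EuclideanSpace ℝ (Fin n₁)) (y : EuclideanSpace ℝ (Fin n₂)) (hx : x ≠ 0) :
    ‖grushinPhi1 α x y‖ ^ 2 + ‖grushinPhi2 α x y‖ ^ 2 +
        ((∑ j : Fin n₁,
            fderiv ℝ (fun x' => grushinPhi1 α x' y) x (EuclideanSpace.single j 1) j) +
          ‖x‖ ^ α *
            ∑ j : Fin n₂,
              fderiv ℝ (fun y' => grushinPhi2 α x y') y (EuclideanSpace.single j 1) j) =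
      -(((QG n₁ n₂ α - 2) / 2) ^ 2) *
        (‖x‖ ^ (2 * α) / grushinNorm α x y ^ (2 * (1 + α))) :=
  grushin_phi_identity_general n₁ n₂ α hα x y hx

end
end
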